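/- arXiv:1811.05758 — 3 statements merged into one kernel-verified Lean document; each statement's English description precedes it below -/
import Mathlib

section
/- For every integer D ≥ 5, the Lebesgue measure of the set Ω = {X ∈ (ℝ³)^D : V_B(X) < 1} is finite. -/
/-!
If `V_B(X) < 1` and `X_k` is a longest vector of `X`, then every `X_i` satisfies `|X_i| ≤ r`
and `|X_k × X_i| ≤ 2`, where `r = |X_k|`; the latter says that `X_i` lies within distance `2 / r`
of the line `ℝ X_k`. In an orthonormal frame adapted to `X_k` these vectors fill a box of volume
`8 r min(r, 2 / r)² ≲ (1 + r)⁻¹`. Integrating over `X_k` the product of these bounds for the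
other `D - 1` vectors leaves `∫_{ℝ³} (1 + |u|)^{1 - D} du`, which is finite since `D - 1 > 3`.
-/

open MeasureTheory

/-- The cross product on `ℝ³` viewed as `EuclideanSpace ℝ (Fin 3)`. -/
noncomputable def cross3 (u v : EuclideanSpace ℝ (Fin 3)) : EuclideanSpace ℝ (Fin 3) :=
  (WithLp.equiv 2 (Fin 3 → ℝ)).symm
    (crossProduct ((WithLp.equiv 2 (Fin 3 → ℝ)) u) ((WithLp.equiv 2 (Fin 3 → ℝ)) v))

/-- The SU(2) bosonic membrane potential
`V_B(X) = (1/2) ∑_{i,j} |X_i × X_j|²`. -/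
noncomputable def VB (D : ℕ) (X : Fin D → EuclideanSpace ℝ (Fin 3)) : ℝ :=
  (1 / 2) * ∑ i, ∑ j, ‖cross3 (X i) (X j)‖ ^ 2

open RealInnerProductSpace Module

local notation "ℝ³" => EuclideanSpace ℝ (Fin 3)

lemma norm_cross3_sq (u v : ℝ³) :
    ‖cross3 u v‖ ^ 2 = ‖u‖ ^ 2 * ‖v‖ ^ 2 - ⟪u, v⟫ ^ 2 := by
  simp only [← real_inner_self_eq_norm_sq, EuclideanSpace.inner_eq_star_dotProduct, star_trivial,
    cross3, WithLp.equiv_apply, WithLp.equiv_symm_apply, cross_dot_cross]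
  rw [dotProduct_comm v.ofLp u.ofLp]
  ring

lemma continuous_cross3 : Continuous fun p : ℝ³ × ℝ³ => cross3 p.1 p.2 := by
  simp only [cross3, WithLp.equiv_apply, WithLp.equiv_symm_apply, cross_apply]
  fun_prop

lemma norm_cross3_sq_le_two_mul_VB {D : ℕ} (X : Fin D → ℝ³) (i j : Fin D) :
    ‖cross3 (X i) (X j)‖ ^ 2 ≤ 2 * VB D X := by
  have hrow : ‖cross3 (X i) (X j)‖ ^ 2 ≤ ∑ j', ‖cross3 (X i) (X j')‖ ^ 2 :=
    Finset.single_le_sum (f := fun j' => ‖cross3 (X i) (X j')‖ ^ 2) (fun _ _ => sq_nonneg _)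
      (Finset.mem_univ j)
  have hsum : ∑ j', ‖cross3 (X i) (X j')‖ ^ 2 ≤ ∑ i', ∑ j', ‖cross3 (X i') (X j')‖ ^ 2 :=
    Finset.single_le_sum (f := fun i' => ∑ j', ‖cross3 (X i') (X j')‖ ^ 2)
      (fun _ _ => Finset.sum_nonneg fun _ _ => sq_nonneg _) (Finset.mem_univ i)
  rw [VB]
  linarith

lemma exists_orthonormalBasis_eq_norm_smul {ι F : Type*} [Fintype ι] [NormedAddCommGroup F]
    [InnerProductSpace ℝ F] [FiniteDimensional ℝ F] (hcard : finrank ℝ F = Fintype.card ι)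
    (i : ι) (u : F) : ∃ b : OrthonormalBasis ι ℝ F, u = ‖u‖ • b i := by
  rcases eq_or_ne u 0 with rfl | hu
  · have hempty : Orthonormal ℝ ((∅ : Set ι).domRestrict fun _ => (0 : F)) :=
      orthonormal_subsingleton_iff.2 fun j => j.2.elim
    obtain ⟨b, -⟩ := hempty.exists_orthonormalBasis_extension_of_card_eq hcard
    exact ⟨b, by simp⟩
  · have hunit : Orthonormal ℝ (({i} : Set ι).domRestrict fun _ => ‖u‖⁻¹ • u) :=
      orthonormal_subsingleton_iff.2 fun _ => norm_smul_inv_norm hu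
    obtain ⟨b, hb⟩ := hunit.exists_orthonormalBasis_extension_of_card_eq hcard
    refine ⟨b, ?_⟩
    rw [hb i rfl, smul_inv_smul₀ (norm_ne_zero_iff.2 hu)]

lemma OrthonormalBasis.volume_setOf_forall_abs_repr_le {ι F : Type*} [Fintype ι]
    [NormedAddCommGroup F] [InnerProductSpace ℝ F] [FiniteDimensional ℝ F] [MeasurableSpace F]
    [BorelSpace F] (b : OrthonormalBasis ι ℝ F) (a : ι → ℝ) :
    volume {v | ∀ i, |b.repr v i| ≤ a i} = ∏ i, ENNReal.ofReal (2 * a i) := by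
  have hbox : {v | ∀ i, |b.repr v i| ≤ a i} =
      WithLp.ofLp ∘ b.repr ⁻¹' Set.univ.pi fun i => Set.Icc (-a i) (a i) := by
    ext v
    simp only [Set.mem_ofPred_eq, Set.mem_preimage, Function.comp_apply, Set.mem_univ_pi,
      Set.mem_Icc, abs_le]
  rw [hbox, ((PiLp.volume_preserving_ofLp ι).comp b.measurePreserving_repr).measure_preimage
    (MeasurableSet.univ_pi fun _ => measurableSet_Icc).nullMeasurableSet, volume_pi_pi]
  simp [two_mul]

lemma norm_cross3_sq_eq_repr {b : OrthonormalBasis (Fin 3) ℝ ℝ³} {u : ℝ³} (hb : u = ‖u‖ • b 0)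
    (v : ℝ³) : ‖cross3 u v‖ ^ 2 = ‖u‖ ^ 2 * (b.repr v 1 ^ 2 + b.repr v 2 ^ 2) := by
  have hnorm : ‖v‖ ^ 2 = b.repr v 0 ^ 2 + b.repr v 1 ^ 2 + b.repr v 2 ^ 2 := by
    rw [← b.repr.norm_map, EuclideanSpace.real_norm_sq_eq, Fin.sum_univ_three]
  have hinner : ⟪u, v⟫ = ‖u‖ * b.repr v 0 := by
    conv_lhs => rw [hb]
    rw [real_inner_smul_left, b.repr_apply_apply]
  rw [norm_cross3_sq, hnorm, hinner]
  ring

/-- The ball of radius `‖u‖` cut down to the tube of radius `c / ‖u‖` around `ℝ u`. -/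
def crossTube (c : ℝ) (u : ℝ³) : Set ℝ³ := {v | ‖v‖ ≤ ‖u‖ ∧ ‖cross3 u v‖ ≤ c}

lemma isClosed_setOf_mem_crossTube (c : ℝ) : IsClosed {p : ℝ³ × ℝ³ | p.2 ∈ crossTube c p.1} :=
  (isClosed_le continuous_snd.norm continuous_fst.norm).inter
    (isClosed_le continuous_cross3.norm continuous_const)

lemma crossTube_zero_subset (c : ℝ) : crossTube c 0 ⊆ {0} := fun v hv => by
  simpa using hv.1

lemma abs_repr_le_of_mem_crossTube {b : OrthonormalBasis (Fin 3) ℝ ℝ³} {u v : ℝ³} {c : ℝ}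
    (hb : u = ‖u‖ • b 0) (hu : u ≠ 0) (hv : v ∈ crossTube c u) :
    ∀ i, |b.repr v i| ≤ ![‖u‖, min ‖u‖ (c / ‖u‖), min ‖u‖ (c / ‖u‖)] i := by
  obtain ⟨hvu, hcross⟩ := hv
  have hr : 0 < ‖u‖ := norm_pos_iff.2 hu
  have hc : 0 ≤ c := (norm_nonneg _).trans hcross
  have hcoord (i) : |b.repr v i| ≤ ‖u‖ :=
    ((b.repr v).norm_apply_le i).trans ((b.repr.norm_map v).trans_le hvu)
  have htransverse : ‖u‖ ^ 2 * (b.repr v 1 ^ 2 + b.repr v 2 ^ 2) ≤ c ^ 2 := by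
    rw [← norm_cross3_sq_eq_repr hb]
    gcongr
  have hsmall (i) (h : b.repr v i ^ 2 ≤ b.repr v 1 ^ 2 + b.repr v 2 ^ 2) :
      |b.repr v i| ≤ c / ‖u‖ := by
    refine abs_le_of_sq_le_sq ?_ (by positivity)
    rw [div_pow, le_div_iff₀ (by positivity)]
    nlinarith
  intro i
  fin_cases i
  · exact hcoord 0
  · exact le_min (hcoord 1) (hsmall 1 (by nlinarith))
  · exact le_min (hcoord 2) (hsmall 2 (by nlinarith))

lemma mul_min_div_sq_le {r c : ℝ} (hr : 0 < r) (hc : 0 ≤ c) :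
    r * min r (c / r) ^ 2 * (1 + r) ≤ 2 * (1 + c ^ 2) := by
  have hs : 0 ≤ min r (c / r) := le_min hr.le (by positivity)
  rcases le_total r 1 with hr1 | hr1
  · have hs1 : min r (c / r) ^ 2 ≤ 1 := pow_le_one₀ hs ((min_le_left _ _).trans hr1)
    have hr2 : r * (1 + r) ≤ 2 := by nlinarith
    calc r * min r (c / r) ^ 2 * (1 + r) = min r (c / r) ^ 2 * (r * (1 + r)) := by ring
      _ ≤ 1 * 2 := by gcongr
      _ ≤ 2 * (1 + c ^ 2) := by nlinarith
  · have : min r (c / r) ^ 2 * r ^ 2 ≤ c ^ 2 := by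
      calc min r (c / r) ^ 2 * r ^ 2 ≤ (c / r) ^ 2 * r ^ 2 := by gcongr; exact min_le_right _ _
        _ = c ^ 2 := by field_simp
    nlinarith

lemma volume_crossTube_le {c : ℝ} (hc : 0 ≤ c) (u : ℝ³) :
    volume (crossTube c u) ≤ ENNReal.ofReal (16 * (1 + c ^ 2) / (1 + ‖u‖)) := by
  rcases eq_or_ne u 0 with rfl | hu
  · rw [measure_mono_null (crossTube_zero_subset c) (measure_singleton 0)]
    exact bot_le
  obtain ⟨b, hb⟩ := exists_orthonormalBasis_eq_norm_smul (ι := Fin 3) (by simp) 0 u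
  have hr : 0 < ‖u‖ := norm_pos_iff.2 hu
  calc volume (crossTube c u)
      ≤ volume {v | ∀ i, |b.repr v i| ≤ ![‖u‖, min ‖u‖ (c / ‖u‖), min ‖u‖ (c / ‖u‖)] i} :=
        measure_mono fun v hv => abs_repr_le_of_mem_crossTube hb hu hv
    _ = ENNReal.ofReal (8 * (‖u‖ * min ‖u‖ (c / ‖u‖) ^ 2)) := by
        have hs : 0 ≤ min ‖u‖ (c / ‖u‖) := le_min hr.le (by positivity)
        rw [b.volume_setOf_forall_abs_repr_le, Fin.prod_univ_three]
        simp only [Matrix.cons_val_zero, Matrix.cons_val_one, Matrix.cons_val_two,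
          Matrix.head_cons, Matrix.tail_cons]
        rw [← ENNReal.ofReal_mul (by positivity), ← ENNReal.ofReal_mul (by positivity)]
        ring_nf
    _ ≤ ENNReal.ofReal (16 * (1 + c ^ 2) / (1 + ‖u‖)) := by
        gcongr
        rw [le_div_iff₀ (by positivity)]
        linarith [mul_min_div_sq_le hr hc]

lemma MeasureTheory.Measure.pi_setOf_forall_mem_le {α : Type*} [MeasurableSpace α] (μ : Measure α)
    [SigmaFinite μ] {n : ℕ} {T : α → Set α} (hT : MeasurableSet {p : α × α | p.2 ∈ T p.1})
    (k : Fin (n + 1)) :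
    Measure.pi (fun _ => μ) {X | ∀ i, X i ∈ T (X k)} ≤ ∫⁻ u, μ (T u) ^ n ∂μ := by
  set S : Set (α × (Fin n → α)) := {p | ∀ j, p.2 j ∈ T p.1}
  have hS : MeasurableSet S := by
    simp only [S, Set.ofPred_forall]
    exact MeasurableSet.iInter fun j =>
      hT.preimage (measurable_fst.prodMk ((measurable_pi_apply j).comp measurable_snd))
  calc Measure.pi (fun _ => μ) {X | ∀ i, X i ∈ T (X k)}
      ≤ Measure.pi (fun _ => μ) (MeasurableEquiv.piFinSuccAbove (fun _ => α) k ⁻¹' S) :=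
        measure_mono fun X hX j => hX _
    _ = (μ.prod (Measure.pi fun _ => μ)) S :=
        (measurePreserving_piFinSuccAbove (fun _ => μ) k).measure_preimage hS.nullMeasurableSet
    _ = ∫⁻ u, μ (T u) ^ n ∂μ := by
        rw [Measure.prod_apply hS]
        congr 1 with u
        rw [show Prod.mk u ⁻¹' S = Set.univ.pi fun _ => T u by ext; simp [S]]
        simp [Measure.pi_pi]

lemma lintegral_ofReal_div_one_add_norm_pow_lt_top {E : Type*} [NormedAddCommGroup E]
    [NormedSpace ℝ E] [FiniteDimensional ℝ E] [MeasurableSpace E] [BorelSpace E]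
    (μ : Measure E) [μ.IsAddHaarMeasure] {K : ℝ} (hK : 0 ≤ K) {n : ℕ} (hn : finrank ℝ E < n) :
    ∫⁻ x, ENNReal.ofReal (K / (1 + ‖x‖)) ^ n ∂μ < ⊤ := by
  have hsplit (x : E) : ENNReal.ofReal (K / (1 + ‖x‖)) ^ n
      = ENNReal.ofReal (K ^ n) * ENNReal.ofReal ((1 + ‖x‖) ^ (-(n : ℝ))) := by
    rw [← ENNReal.ofReal_pow (by positivity), ← ENNReal.ofReal_mul (by positivity),
      Real.rpow_neg (by positivity), Real.rpow_natCast, div_pow, div_eq_mul_inv]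
  simp_rw [hsplit]
  rw [lintegral_const_mul _ (by fun_prop)]
  exact ENNReal.mul_lt_top ENNReal.ofReal_lt_top
    (finite_integral_one_add_norm (by exact_mod_cast hn))

lemma lintegral_volume_crossTube_pow_lt_top {c : ℝ} (hc : 0 ≤ c) {n : ℕ} (hn : 3 < n) :
    ∫⁻ u, volume (crossTube c u) ^ n < ⊤ :=
  (lintegral_mono fun u => pow_le_pow_left' (volume_crossTube_le hc u) n).trans_lt
    (lintegral_ofReal_div_one_add_norm_pow_lt_top volume (by positivity) (by simpa using hn))

lemma exists_forall_mem_crossTube {D : ℕ} [NeZero D] {c : ℝ} (hc : 0 ≤ c)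
    {X : Fin D → ℝ³} (hX : 2 * VB D X ≤ c ^ 2) : ∃ k, ∀ i, X i ∈ crossTube c (X k) := by
  obtain ⟨k, hk⟩ := Finite.exists_max fun i => ‖X i‖
  refine ⟨k, fun i => ⟨hk i, ?_⟩⟩
  exact (pow_le_pow_iff_left₀ (norm_nonneg _) hc two_ne_zero).1
    ((norm_cross3_sq_le_two_mul_VB X k i).trans hX)

/-- For every integer `D ≥ 5`, the Lebesgue measure of the valley
`Ω = {X ∈ (ℝ³)^D : V_B(X) < 1}` is finite. -/
theorem measure_valley_lt_top (D : ℕ) (hD : 5 ≤ D) :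
    volume {X : Fin D → EuclideanSpace ℝ (Fin 3) | VB D X < 1} < ⊤ := by
  obtain ⟨n, rfl⟩ : ∃ n, D = n + 1 := ⟨D - 1, by omega⟩
  have hcover : {X : Fin (n + 1) → ℝ³ | VB (n + 1) X < 1} ⊆
      ⋃ k, {X | ∀ i, X i ∈ crossTube 2 (X k)} := fun X hX =>
    Set.mem_iUnion.2 (exists_forall_mem_crossTube zero_le_two (by linarith [hX.out]))
  have hmeas := (isClosed_setOf_mem_crossTube 2).measurableSet
  calc volume {X : Fin (n + 1) → ℝ³ | VB (n + 1) X < 1}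
      ≤ ∑ k, volume {X : Fin (n + 1) → ℝ³ | ∀ i, X i ∈ crossTube 2 (X k)} :=
        (measure_mono hcover).trans (measure_iUnion_fintype_le _ _)
    _ ≤ ∑ _k : Fin (n + 1), ∫⁻ u, volume (crossTube 2 u) ^ n :=
        Finset.sum_le_sum fun k _ => Measure.pi_setOf_forall_mem_le volume hmeas k
    _ < ⊤ := ENNReal.sum_lt_top.2 fun _ _ =>
        lintegral_volume_crossTube_pow_lt_top zero_le_two (by omega)
end

section
/- For every integer D ≥ 5, the Lebesgue measure μ(Ω_{a₀}) of the truncated valley Ω_{a₀} = {X ∈ (ℝ³)^D : V_B(X) < 1 and |X| ≥ a₀} tends to 0 as a₀ → ∞. -/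
/-!
Outside a compact set, `V_B < 1` forces every `X_j` to be almost parallel to the longest vector
`X_{i₀}`: since `|X_{i₀} × X_j|² ≤ 2` and `|X_j| ≤ |X_{i₀}| = r`, each `X_j` lies in a cylinder of
radius `√2 / r` and length `2r` around the axis of `X_{i₀}`, of volume `O(1/r)`. Integrating the
`D - 1` fibres over `X_{i₀}` gives `∫ (1 + |v|)^{-(D-1)} dv` over `ℝ³`, which is finite once
`D - 1 > 3`. So `μ(Ω_{a₀}) < ∞` for some `a₀`, and since the `Ω_{a₀}` decrease to `∅`, their
measures tend to `0`.
-/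

open MeasureTheory Filter

/-- The Euclidean norm of a configuration `X = (X₁, …, X_D)` viewed as a point
of `ℝ^{3D}`. -/
noncomputable def confNorm (D : ℕ) (X : Fin D → EuclideanSpace ℝ (Fin 3)) : ℝ :=
  Real.sqrt (∑ i, ‖X i‖ ^ 2)

namespace MembraneValley

local notation "E3" => EuclideanSpace ℝ (Fin 3)

lemma norm_cross3_sq (v w : E3) :
    ‖cross3 v w‖ ^ 2 = ‖v‖ ^ 2 * ‖w‖ ^ 2 - inner ℝ v w ^ 2 := by
  rw [← real_inner_self_eq_norm_sq, ← real_inner_self_eq_norm_sq,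
    ← real_inner_self_eq_norm_sq]
  simp only [cross3, PiLp.inner_apply, RCLike.inner_apply, conj_trivial,
    WithLp.equiv_symm_apply, WithLp.equiv_apply, cross_apply, Fin.sum_univ_three,
    Matrix.cons_val_zero, Matrix.cons_val_one, Matrix.head_cons, Matrix.cons_val_two,
    Matrix.tail_cons]
  ring

@[fun_prop]
lemma _root_.Continuous.cross3 {α : Type*} [TopologicalSpace α] {f g : α → E3} (hf : Continuous f)
    (hg : Continuous g) : Continuous fun x => cross3 (f x) (g x) := by
  refine (PiLp.continuous_toLp 2 _).comp (continuous_pi fun i => ?_)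
  simp only [cross_apply, WithLp.equiv_apply]
  fin_cases i <;>
    simp only [Fin.isValue, Fin.zero_eta, Fin.mk_one, Fin.reduceFinMk, Matrix.cons_val,
      Matrix.cons_val_zero, Matrix.cons_val_one] <;>
    fun_prop

lemma continuous_VB (D : ℕ) : Continuous (VB D) := by
  unfold VB
  fun_prop

lemma continuous_confNorm (D : ℕ) : Continuous (confNorm D) := by
  unfold confNorm
  fun_prop

lemma norm_cross3_sq_le_two_mul_VB {D : ℕ} (X : Fin D → E3) (i j : Fin D) :
    ‖cross3 (X i) (X j)‖ ^ 2 ≤ 2 * VB D X := by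
  have hrow : ‖cross3 (X i) (X j)‖ ^ 2 ≤ ∑ j', ‖cross3 (X i) (X j')‖ ^ 2 :=
    Finset.single_le_sum (f := fun j' => ‖cross3 (X i) (X j')‖ ^ 2)
      (fun _ _ => sq_nonneg _) (Finset.mem_univ j)
  have hall : ∑ j', ‖cross3 (X i) (X j')‖ ^ 2 ≤ ∑ i', ∑ j', ‖cross3 (X i') (X j')‖ ^ 2 :=
    Finset.single_le_sum (f := fun i' => ∑ j', ‖cross3 (X i') (X j')‖ ^ 2)
      (fun _ _ => Finset.sum_nonneg fun _ _ => sq_nonneg _) (Finset.mem_univ i)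
  unfold VB
  linarith

lemma confNorm_le_sqrt_mul {D : ℕ} {X : Fin D → E3} {M : ℝ} (hM : 0 ≤ M)
    (hX : ∀ j, ‖X j‖ ≤ M) : confNorm D X ≤ √D * M := by
  have hsum : ∑ j, ‖X j‖ ^ 2 ≤ D * M ^ 2 := by
    simpa using Finset.sum_le_card_nsmul Finset.univ (fun j => ‖X j‖ ^ 2) (M ^ 2)
      fun j _ => pow_le_pow_left₀ (norm_nonneg _) (hX j) 2
  calc confNorm D X ≤ √(D * M ^ 2) := Real.sqrt_le_sqrt hsum
    _ = √D * M := by rw [Real.sqrt_mul (Nat.cast_nonneg D), Real.sqrt_sq hM]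

/-- The truncated valley `Ω_{a₀}` of the paper. -/
def truncatedValley (D : ℕ) (a : ℝ) : Set (Fin D → E3) :=
  {X | VB D X < 1 ∧ a ≤ confNorm D X}

lemma measurableSet_truncatedValley (D : ℕ) (a : ℝ) : MeasurableSet (truncatedValley D a) :=
  (isOpen_lt (continuous_VB D) continuous_const).measurableSet.inter
    (isClosed_le continuous_const (continuous_confNorm D)).measurableSet

lemma antitone_truncatedValley (D : ℕ) : Antitone (truncatedValley D) :=
  fun _ _ hab _ hX => ⟨hX.1, hab.trans hX.2⟩

lemma iInter_truncatedValley (D : ℕ) : ⋂ a, truncatedValley D a = ∅ :=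
  Set.eq_empty_of_forall_notMem fun X hX =>
    (lt_add_one (confNorm D X)).not_ge (Set.mem_iInter.1 hX (confNorm D X + 1)).2

def nearlyParallel (c : ℝ) : Set (E3 × E3) :=
  {q | ‖cross3 q.1 q.2‖ ^ 2 ≤ c ∧ ‖q.2‖ ≤ ‖q.1‖}

lemma isClosed_nearlyParallel (c : ℝ) : IsClosed (nearlyParallel c) :=
  (isClosed_le (f := fun q : E3 × E3 => ‖cross3 q.1 q.2‖ ^ 2) (by fun_prop)
    continuous_const).inter
    (isClosed_le continuous_snd.norm continuous_fst.norm)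

lemma truncatedValley_subset_iUnion (n : ℕ) (a : ℝ) :
    truncatedValley (n + 1) a ⊆
      ⋃ i, {X | a / √(n + 1) ≤ ‖X i‖ ∧ ∀ j, (X i, X j) ∈ nearlyParallel 2} := by
  rintro X ⟨hVB, ha⟩
  obtain ⟨i, hmax⟩ := Finite.exists_max fun j => ‖X j‖
  have hnorm : a ≤ √(n + 1) * ‖X i‖ := by
    exact_mod_cast ha.trans (confNorm_le_sqrt_mul (norm_nonneg _) hmax)
  refine Set.mem_iUnion.2 ⟨i, (div_le_iff₀' (by positivity)).2 hnorm, fun j => ⟨?_, hmax j⟩⟩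
  linarith [norm_cross3_sq_le_two_mul_VB X i j]

lemma measure_pi_setOf_forall_mem_le {α : Type*} [MeasurableSpace α] (μ : Measure α)
    [SigmaFinite μ] {A : Set α} {K : Set (α × α)} (hA : MeasurableSet A) (hK : MeasurableSet K)
    {n : ℕ} (i : Fin (n + 1)) :
    Measure.pi (fun _ => μ) {X : Fin (n + 1) → α | X i ∈ A ∧ ∀ j, (X i, X j) ∈ K}
      ≤ ∫⁻ v in A, μ (Prod.mk v ⁻¹' K) ^ n ∂μ := by
  set T : Set (α × (Fin n → α)) := {p | p.1 ∈ A ∧ ∀ j, (p.1, p.2 j) ∈ K}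
  have hT : MeasurableSet T := by
    simp only [T, Set.ofPred_and, Set.ofPred_forall]
    exact (hA.preimage measurable_fst).inter <| MeasurableSet.iInter fun j =>
      hK.preimage (measurable_fst.prodMk ((measurable_pi_apply j).comp measurable_snd))
  have hfiber : (fun v => Measure.pi (fun _ => μ) (Prod.mk v ⁻¹' T))
      = A.indicator fun v => μ (Prod.mk v ⁻¹' K) ^ n := by
    ext v
    by_cases hv : v ∈ A
    · have : Prod.mk v ⁻¹' T = Set.univ.pi fun _ => Prod.mk v ⁻¹' K := by
        ext Y; simp [T, hv, Set.mem_pi]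
      simp [this, Measure.pi_pi, hv]
    · have : Prod.mk v ⁻¹' T = ∅ := by
        ext Y; simp [T, hv]
      simp [this, hv]
  calc Measure.pi (fun _ => μ) {X : Fin (n + 1) → α | X i ∈ A ∧ ∀ j, (X i, X j) ∈ K}
      ≤ Measure.pi (fun _ => μ) (MeasurableEquiv.piFinSuccAbove (fun _ => α) i ⁻¹' T) :=
        measure_mono fun X hX => ⟨hX.1, fun j => hX.2 _⟩
    _ = (μ.prod (Measure.pi fun _ => μ)) T :=
        (measurePreserving_piFinSuccAbove (fun _ => μ) i).measure_preimage_equiv T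
    _ = ∫⁻ v in A, μ (Prod.mk v ⁻¹' K) ^ n ∂μ := by
        rw [Measure.prod_apply hT, hfiber, lintegral_indicator hA]

lemma _root_.EuclideanSpace.volume_setOf_forall_abs_le {ι : Type*} [Fintype ι] (a : ι → ℝ) :
    volume {z : EuclideanSpace ℝ ι | ∀ i, |z i| ≤ a i} = ∏ i, ENNReal.ofReal (2 * a i) := by
  have : {z : EuclideanSpace ℝ ι | ∀ i, |z i| ≤ a i}
      = (MeasurableEquiv.toLp 2 (ι → ℝ)).symm ⁻¹' Set.univ.pi fun i => Set.Icc (-a i) (a i) := by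
    ext z
    simp [abs_le, -Set.pi_univ_Icc]
  rw [this, (EuclideanSpace.volume_preserving_symm_measurableEquiv_toLp ι).measure_preimage_equiv,
    volume_pi_pi]
  simp only [Real.volume_Icc, sub_neg_eq_add, two_mul]

lemma volume_fiber_nearlyParallel_le {c : ℝ} (hc : 0 ≤ c) {v : E3} (hv : v ≠ 0) :
    volume (Prod.mk v ⁻¹' nearlyParallel c) ≤ ENNReal.ofReal (8 * c / ‖v‖) := by
  set r := ‖v‖
  have hr : 0 < r := norm_pos_iff.2 hv
  set e : E3 := EuclideanSpace.single 2 1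
  -- a reflection turns the axis of `v` into the third coordinate axis
  obtain ⟨g, hg⟩ : ∃ g : E3 ≃ₗᵢ[ℝ] E3, g v = r • e :=
    ⟨Submodule.reflection (ℝ ∙ (v - r • e))ᗮ,
      Submodule.reflection_sub (by simp [e, r, norm_smul])⟩
  set s := √(c / r ^ 2)
  have hsub : Prod.mk v ⁻¹' nearlyParallel c ⊆ g ⁻¹' {z | ∀ i, |z i| ≤ ![s, s, r] i} := by
    rintro w ⟨hcross, hw⟩
    set z := g w
    have hinner : inner ℝ v w = r * z 2 := by
      rw [← g.inner_map_map, hg, real_inner_smul_left]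
      simp [e, z, EuclideanSpace.inner_single_left]
    have hz : ‖z‖ ^ 2 = z 0 ^ 2 + z 1 ^ 2 + z 2 ^ 2 := by
      simp [EuclideanSpace.norm_sq_eq, Fin.sum_univ_three]
    have hperp : r ^ 2 * (z 0 ^ 2 + z 1 ^ 2) ≤ c := by
      rw [norm_cross3_sq, hinner, ← g.norm_map w] at hcross
      nlinarith
    have hsmall : ∀ x : ℝ, r ^ 2 * x ^ 2 ≤ c → |x| ≤ s := fun x hx =>
      Real.abs_le_sqrt ((le_div_iff₀ (by positivity)).2 (by linarith))
    intro i
    fin_cases i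
    · exact hsmall (z 0) (by nlinarith [sq_nonneg (z 1)])
    · exact hsmall (z 1) (by nlinarith [sq_nonneg (z 0)])
    · simpa [← Real.norm_eq_abs, z, r] using
        (PiLp.norm_apply_le z 2).trans ((g.norm_map w).le.trans hw)
  calc volume (Prod.mk v ⁻¹' nearlyParallel c)
      ≤ volume (g ⁻¹' {z | ∀ i, |z i| ≤ ![s, s, r] i}) := measure_mono hsub
    _ = volume {z : E3 | ∀ i, |z i| ≤ ![s, s, r] i} :=
        (show MeasurePreserving g.toMeasurableEquiv volume volume from g.measurePreserving)
          |>.measure_preimage_equiv _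
    _ = ENNReal.ofReal (2 * s) * ENNReal.ofReal (2 * s) * ENNReal.ofReal (2 * r) := by
        rw [EuclideanSpace.volume_setOf_forall_abs_le, Fin.prod_univ_three]
        rfl
    _ = ENNReal.ofReal (8 * c / r) := by
        rw [← ENNReal.ofReal_mul (by positivity), ← ENNReal.ofReal_mul (by positivity)]
        congr 1
        rw [show 2 * s * (2 * s) * (2 * r) = 8 * (s * s) * r by ring,
          Real.mul_self_sqrt (by positivity)]
        field_simp

lemma volume_fiber_nearlyParallel_le_one_add {c ρ : ℝ} (hc : 0 ≤ c) (hρ : 0 < ρ) {v : E3}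
    (hv : ρ ≤ ‖v‖) :
    volume (Prod.mk v ⁻¹' nearlyParallel c) ≤ ENNReal.ofReal (8 * c * (1 + ρ⁻¹) / (1 + ‖v‖)) := by
  have hv0 : 0 < ‖v‖ := hρ.trans_le hv
  refine (volume_fiber_nearlyParallel_le hc (norm_pos_iff.1 hv0)).trans
    (ENNReal.ofReal_le_ofReal ?_)
  have : 1 + ‖v‖ ≤ (1 + ρ⁻¹) * ‖v‖ := by
    have : 1 ≤ ρ⁻¹ * ‖v‖ := by rw [inv_mul_eq_div, one_le_div hρ]; exact hv
    linarith
  rw [div_le_div_iff₀ hv0 (by positivity), mul_assoc (8 * c)]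
  exact mul_le_mul_of_nonneg_left this (by positivity)

lemma setLIntegral_volume_fiber_nearlyParallel_pow_lt_top {c ρ : ℝ} (hc : 0 ≤ c) (hρ : 0 < ρ)
    {n : ℕ} (hn : 3 < n) :
    ∫⁻ v in {v : E3 | ρ ≤ ‖v‖}, volume (Prod.mk v ⁻¹' nearlyParallel c) ^ n < ⊤ := by
  set K := 8 * c * (1 + ρ⁻¹)
  have hbound : ∀ v ∈ {v : E3 | ρ ≤ ‖v‖}, volume (Prod.mk v ⁻¹' nearlyParallel c) ^ n
      ≤ ENNReal.ofReal (K ^ n) * ENNReal.ofReal ((1 + ‖v‖) ^ (-(n : ℝ))) := fun v hv => by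
    calc volume (Prod.mk v ⁻¹' nearlyParallel c) ^ n
        ≤ ENNReal.ofReal (K / (1 + ‖v‖)) ^ n :=
          pow_le_pow_left' (volume_fiber_nearlyParallel_le_one_add hc hρ hv) n
      _ = ENNReal.ofReal (K ^ n) * ENNReal.ofReal ((1 + ‖v‖) ^ (-(n : ℝ))) := by
          rw [← ENNReal.ofReal_pow (by positivity), ← ENNReal.ofReal_mul (by positivity),
            Real.rpow_neg (by positivity), Real.rpow_natCast, div_pow, div_eq_mul_inv]
  calc ∫⁻ v in {v : E3 | ρ ≤ ‖v‖}, volume (Prod.mk v ⁻¹' nearlyParallel c) ^ n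
      ≤ ∫⁻ v in {v : E3 | ρ ≤ ‖v‖}, ENNReal.ofReal (K ^ n) *
          ENNReal.ofReal ((1 + ‖v‖) ^ (-(n : ℝ))) :=
        setLIntegral_mono' (measurableSet_le measurable_const measurable_norm) hbound
    _ ≤ ENNReal.ofReal (K ^ n) * ∫⁻ v : E3, ENNReal.ofReal ((1 + ‖v‖) ^ (-(n : ℝ))) := by
        rw [← lintegral_const_mul' _ _ ENNReal.ofReal_ne_top]
        exact setLIntegral_le_lintegral _ _
    _ < ⊤ := ENNReal.mul_lt_top ENNReal.ofReal_lt_top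
        (finite_integral_one_add_norm (by rw [finrank_euclideanSpace_fin]; exact_mod_cast hn))

lemma volume_truncatedValley_lt_top {n : ℕ} (hn : 3 < n) {a : ℝ} (ha : 0 < a) :
    volume (truncatedValley (n + 1) a) < ⊤ := by
  have hρ : 0 < a / √(n + 1) := by positivity
  calc volume (truncatedValley (n + 1) a)
      ≤ ∑ i, volume {X : Fin (n + 1) → E3 | a / √(n + 1) ≤ ‖X i‖ ∧
          ∀ j, (X i, X j) ∈ nearlyParallel 2} :=
        (measure_mono (truncatedValley_subset_iUnion n a)).trans (measure_iUnion_fintype_le _ _)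
    _ ≤ ∑ _i : Fin (n + 1), ∫⁻ v in {v : E3 | a / √(n + 1) ≤ ‖v‖},
          volume (Prod.mk v ⁻¹' nearlyParallel 2) ^ n :=
        Finset.sum_le_sum fun i _ => measure_pi_setOf_forall_mem_le volume
          (measurableSet_le measurable_const measurable_norm)
          (isClosed_nearlyParallel 2).measurableSet i
    _ < ⊤ := ENNReal.sum_lt_top.2 fun _ _ =>
        setLIntegral_volume_fiber_nearlyParallel_pow_lt_top zero_le_two hρ hn

end MembraneValley

open MembraneValley in
/-- For every integer `D ≥ 5`, the Lebesgue measure of the truncated valley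
`Ω_{a₀} = {X ∈ (ℝ³)^D : V_B(X) < 1, |X| ≥ a₀}` tends to `0` as `a₀ → ∞`. -/
theorem measure_truncated_valley_tendsto_zero (D : ℕ) (hD : 5 ≤ D) :
    Tendsto
      (fun a₀ : ℝ =>
        volume {X : Fin D → EuclideanSpace ℝ (Fin 3) | VB D X < 1 ∧ a₀ ≤ confNorm D X})
      atTop (nhds 0) := by
  obtain ⟨n, rfl⟩ : ∃ n, D = n + 1 := ⟨D - 1, by omega⟩
  have h := tendsto_measure_iInter_atTop
    (fun a => (measurableSet_truncatedValley (n + 1) a).nullMeasurableSet)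
    (antitone_truncatedValley (n + 1))
    ⟨1, (volume_truncatedValley_lt_top (by omega) one_pos).ne⟩
  rwa [iInter_truncatedValley, measure_empty] at h
end

section
/- For every integer D > 5, the integral of the Euclidean norm over the valley is finite: ∫_Ω |X| dμ(X) < ∞, where Ω = {X ∈ (ℝ³)^D : V_B(X) < 1}. -/
open MeasureTheory

open scoped ENNReal InnerProductSpace

/-!
Let `X` lie in the valley and let `X i` be a vector of maximal norm `r`. Since
`‖X i × X j‖² ≤ 2 V_B(X) < 2`, every `X j` lies in the cylinder around the axis `ℝ X i` of radius
`√2 / r` and half-length `r`, whose volume is `O(min (r³, r⁻¹))`. Integrating out the other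
`D - 1` vectors bounds the integral over this piece of the valley by
`∫_{ℝ³} ‖x‖ · min (‖x‖³, ‖x‖⁻¹) ^ (D - 1) dx`, whose integrand decays like `‖x‖ ^ (2 - D)`;
this is integrable on `ℝ³` exactly when `D > 5`.
-/

local notation "E3" => EuclideanSpace ℝ (Fin 3)

theorem norm_cross3_sq_s12 (x y : E3) : ‖cross3 x y‖ ^ 2 = ‖x‖ ^ 2 * ‖y‖ ^ 2 - ⟪x, y⟫_ℝ ^ 2 := by
  simp only [cross3, ← real_inner_self_eq_norm_sq, EuclideanSpace.inner_eq_star_dotProduct]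
  simp [cross_dot_cross, dotProduct_comm y.ofLp]
  ring

def nearlyParallel (x : E3) : Set E3 := {y | ‖y‖ ≤ ‖x‖ ∧ ‖cross3 x y‖ ^ 2 < 2}

theorem measurableSet_nearlyParallel_graph :
    MeasurableSet {p : E3 × E3 | p.2 ∈ nearlyParallel p.1} := by
  simp only [nearlyParallel, norm_cross3_sq_s12, Set.ofPred_and]
  exact (measurableSet_le (by fun_prop) (by fun_prop)).inter
    (measurableSet_lt (by fun_prop) (by fun_prop))

theorem OrthonormalBasis.volume_setOf_abs_repr_le {ι F : Type*} [Fintype ι] [NormedAddCommGroup F]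
    [InnerProductSpace ℝ F] [FiniteDimensional ℝ F] [MeasurableSpace F] [BorelSpace F]
    (b : OrthonormalBasis ι ℝ F) (c : ι → ℝ) :
    volume {y | ∀ k, |b.repr y k| ≤ c k} = ∏ k, ENNReal.ofReal (2 * c k) := by
  have hbox : {y | ∀ k, |b.repr y k| ≤ c k} =
      b.repr ⁻¹' ((MeasurableEquiv.toLp 2 (ι → ℝ)).symm ⁻¹'
        Set.univ.pi fun k => Set.Icc (-c k) (c k)) := by
    ext y
    simp only [Set.mem_ofPred_eq, Set.mem_preimage, Set.mem_univ_pi, Set.mem_Icc, abs_le]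
    rfl
  have hpi : MeasurableSet (Set.univ.pi fun k => Set.Icc (-c k) (c k)) :=
    MeasurableSet.univ_pi fun _ => measurableSet_Icc
  have hbox_meas := measurableSet_preimage (MeasurableEquiv.toLp 2 (ι → ℝ)).symm.measurable hpi
  rw [hbox, b.measurePreserving_repr.measure_preimage hbox_meas.nullMeasurableSet,
    (EuclideanSpace.volume_preserving_symm_measurableEquiv_toLp ι).measure_preimage
      hpi.nullMeasurableSet,
    volume_pi_pi]
  simp only [Real.volume_Icc]
  congr! 2; ring

theorem exists_orthonormalBasis_apply_eq {ι E : Type*} [Fintype ι] [NormedAddCommGroup E]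
    [InnerProductSpace ℝ E] [FiniteDimensional ℝ E] (h : Module.finrank ℝ E = Fintype.card ι)
    (i : ι) {u : E} (hu : ‖u‖ = 1) : ∃ b : OrthonormalBasis ι ℝ E, b i = u := by
  have hon : Orthonormal ℝ (({i} : Set ι).domRestrict fun _ => u) :=
    ⟨fun _ => hu, fun {j k} hjk => absurd (Subsingleton.elim j k) hjk⟩
  obtain ⟨b, hb⟩ := hon.exists_orthonormalBasis_extension_of_card_eq h
  exact ⟨b, hb i rfl⟩

theorem nearlyParallel_subset_box {x : E3} (hx : x ≠ 0) {b : OrthonormalBasis (Fin 3) ℝ E3}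
    (hb : b 0 = ‖x‖⁻¹ • x) :
    let m := √(min (‖x‖ ^ 2) (2 / ‖x‖ ^ 2))
    nearlyParallel x ⊆ {y | ∀ k, |b.repr y k| ≤ ![‖x‖, m, m] k} := by
  intro m y ⟨hyx, hcross⟩
  set r := ‖x‖
  have hr : 0 < r := norm_pos_iff.2 hx
  have hnorm : ‖y‖ ^ 2 = b.repr y 0 ^ 2 + b.repr y 1 ^ 2 + b.repr y 2 ^ 2 := by
    rw [← b.repr.norm_map, EuclideanSpace.norm_sq_eq, Fin.sum_univ_three]; simp
  have hinner : ⟪x, y⟫_ℝ = r * b.repr y 0 := by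
    rw [b.repr_apply_apply, hb, real_inner_smul_left, mul_inv_cancel_left₀ hr.ne']
  have hperp : r ^ 2 * (b.repr y 1 ^ 2 + b.repr y 2 ^ 2) < 2 := by
    rw [norm_cross3_sq_s12, hinner, hnorm] at hcross; linarith
  have hyr : ‖y‖ ^ 2 ≤ r ^ 2 := pow_le_pow_left₀ (norm_nonneg _) hyx 2
  have hsmall : ∀ t, t ^ 2 ≤ b.repr y 1 ^ 2 + b.repr y 2 ^ 2 → |t| ≤ m := fun t ht =>
    Real.abs_le_sqrt (le_min (by nlinarith [sq_nonneg (b.repr y 0)])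
      (by rw [le_div_iff₀ (by positivity)]; nlinarith))
  intro k
  fin_cases k <;> dsimp
  · exact abs_le_of_sq_le_sq (by nlinarith [sq_nonneg (b.repr y 1), sq_nonneg (b.repr y 2)]) hr.le
  · exact hsmall _ (by nlinarith [sq_nonneg (b.repr y 2)])
  · exact hsmall _ (by nlinarith [sq_nonneg (b.repr y 1)])

theorem volume_nearlyParallel_le (x : E3) :
    volume (nearlyParallel x) ≤ ENNReal.ofReal (16 * min (‖x‖ ^ 3) ‖x‖⁻¹) := by
  rcases eq_or_ne x 0 with rfl | hx
  · refine (measure_mono_null (fun y hy => ?_) (measure_singleton (0 : E3))).trans_le bot_le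
    simpa [nearlyParallel] using hy.1
  set r := ‖x‖
  have hr : 0 < r := norm_pos_iff.2 hx
  obtain ⟨b, hb⟩ := exists_orthonormalBasis_apply_eq (by simp) (0 : Fin 3) (u := r⁻¹ • x)
    (by simp [r, norm_smul, hx])
  set m := √(min (r ^ 2) (2 / r ^ 2))
  have hm : m ^ 2 = min (r ^ 2) (2 / r ^ 2) := Real.sq_sqrt (by positivity)
  calc volume (nearlyParallel x) ≤ volume {y | ∀ k, |b.repr y k| ≤ ![r, m, m] k} :=
        measure_mono (nearlyParallel_subset_box hx hb)
  _ = ENNReal.ofReal (8 * r * min (r ^ 2) (2 / r ^ 2)) := by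
    rw [b.volume_setOf_abs_repr_le, Fin.prod_univ_three]
    simp only [Matrix.cons_val_zero, Matrix.cons_val_one, Matrix.cons_val_two, Matrix.vecHead,
      Matrix.vecTail, Function.comp_apply, Fin.succ_zero_eq_one]
    rw [← ENNReal.ofReal_mul (by positivity), ← ENNReal.ofReal_mul (by positivity)]
    congr 1
    linear_combination 8 * r * hm
  _ ≤ ENNReal.ofReal (16 * min (r ^ 3) r⁻¹) := by
    refine ENNReal.ofReal_le_ofReal ?_
    rw [mul_min_of_nonneg _ _ (by positivity), mul_min_of_nonneg _ _ (by norm_num)]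
    refine min_le_min (by nlinarith [pow_pos hr 3]) (le_of_eq ?_)
    field_simp
    ring

theorem mul_min_pow_le {n : ℕ} (hn : 5 ≤ n) {r : ℝ} (hr : 0 ≤ r) :
    r * min (r ^ 3) r⁻¹ ^ n ≤ 16 * (1 + r) ^ (-4 : ℝ) := by
  have hw : 0 ≤ min (r ^ 3) r⁻¹ := by positivity
  rw [Real.rpow_neg (by positivity), ← div_eq_mul_inv, le_div_iff₀ (by positivity)]
  norm_cast
  rcases le_total r 1 with h | h
  · have hpow : min (r ^ 3) r⁻¹ ^ n ≤ 1 :=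
      pow_le_one₀ hw ((min_le_left _ _).trans (pow_le_one₀ hr h))
    calc r * min (r ^ 3) r⁻¹ ^ n * (1 + r) ^ 4 ≤ 1 * 1 * 2 ^ 4 := by gcongr; linarith
    _ = 16 := by norm_num
  · have hpow : min (r ^ 3) r⁻¹ ^ n ≤ r⁻¹ ^ 5 :=
      (pow_le_pow_left₀ hw (min_le_right _ _) n).trans
        (pow_le_pow_of_le_one (by positivity) (inv_le_one_of_one_le₀ h) hn)
    calc r * min (r ^ 3) r⁻¹ ^ n * (1 + r) ^ 4 ≤ r * r⁻¹ ^ 5 * (2 * r) ^ 4 := by gcongr; linarith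
    _ = 16 := by field_simp; ring

theorem lintegral_norm_mul_volume_nearlyParallel_pow_lt_top {n : ℕ} (hn : 5 ≤ n) :
    ∫⁻ x : E3, ENNReal.ofReal ‖x‖ * volume (nearlyParallel x) ^ n < ⊤ := by
  have hint : Integrable fun x : E3 => 16 ^ n * (16 * (1 + ‖x‖) ^ (-4 : ℝ)) :=
    ((integrable_one_add_norm (by simp; norm_num)).const_mul 16).const_mul _
  refine lt_of_le_of_lt (lintegral_mono fun x => ?_) hint.lintegral_lt_top
  calc ENNReal.ofReal ‖x‖ * volume (nearlyParallel x) ^ n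
      ≤ ENNReal.ofReal ‖x‖ * ENNReal.ofReal (16 * min (‖x‖ ^ 3) ‖x‖⁻¹) ^ n := by
        gcongr; exact volume_nearlyParallel_le x
  _ = ENNReal.ofReal (16 ^ n * (‖x‖ * min (‖x‖ ^ 3) ‖x‖⁻¹ ^ n)) := by
        rw [← ENNReal.ofReal_pow (by positivity), ← ENNReal.ofReal_mul (norm_nonneg _)]
        ring_nf
  _ ≤ _ := ENNReal.ofReal_le_ofReal
        (mul_le_mul_of_nonneg_left (mul_min_pow_le hn (norm_nonneg x)) (by positivity))

theorem lintegral_pi_forall_mem_le {E : Type*} [MeasurableSpace E] (μ : Measure E)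
    [SigmaFinite μ] {n : ℕ} (i : Fin (n + 1)) {A : E → Set E}
    (hA : MeasurableSet {p : E × E | p.2 ∈ A p.1})
    {g : E → ℝ≥0∞} (hg : Measurable g) :
    ∫⁻ X in {X : Fin (n + 1) → E | ∀ j, X j ∈ A (X i)}, g (X i) ∂(Measure.pi fun _ => μ)
      ≤ ∫⁻ x, g x * μ (A x) ^ n ∂μ := by
  set e := MeasurableEquiv.piFinSuccAbove (fun _ => E) i
  set S : Set (E × (Fin n → E)) := {q | ∀ k, q.2 k ∈ A q.1}
  have hS : MeasurableSet S := by
    have : S = ⋂ k, (fun q : E × (Fin n → E) => (q.1, q.2 k)) ⁻¹' {p | p.2 ∈ A p.1} := by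
      ext; simp [S]
    rw [this]
    exact MeasurableSet.iInter fun k => (by fun_prop : Measurable _) hA
  calc ∫⁻ X in {X : Fin (n + 1) → E | ∀ j, X j ∈ A (X i)}, g (X i) ∂(Measure.pi fun _ => μ)
      ≤ ∫⁻ X in e ⁻¹' S, g (e X).1 ∂(Measure.pi fun _ => μ) :=
        lintegral_mono_set fun X hX k => hX _
  _ = ∫⁻ q in S, g q.1 ∂μ.prod (Measure.pi fun _ => μ) :=
        (measurePreserving_piFinSuccAbove (fun _ => μ) i).setLIntegral_comp_preimage hS
          (hg.comp measurable_fst)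
  _ = ∫⁻ x, g x * μ (A x) ^ n ∂μ := by
        have hind : Measurable (S.indicator fun q => g q.1) := (hg.comp measurable_fst).indicator hS
        rw [← lintegral_indicator hS, lintegral_prod _ hind.aemeasurable]
        refine lintegral_congr fun x => ?_
        have hslice : ∀ y, S.indicator (fun q => g q.1) (x, y)
            = (Set.univ.pi fun _ => A x).indicator (fun _ => g x) y := by
          classical
          intro y
          rw [Set.indicator_apply, Set.indicator_apply]
          simp [S]
        simp_rw [hslice]
        have hAx : MeasurableSet (A x) := measurable_prodMk_left hA
        rw [lintegral_indicator_const (MeasurableSet.univ_pi fun _ => hAx),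
          Measure.pi_pi, Finset.prod_const, Finset.card_univ, Fintype.card_fin]

theorem valley_subset_iUnion {D : ℕ} [NeZero D] :
    {X : Fin D → E3 | VB D X < 1} ⊆ ⋃ i, {X | ∀ j, X j ∈ nearlyParallel (X i)} := by
  intro X hX
  obtain ⟨i, hi⟩ := Finite.exists_max fun j => ‖X j‖
  refine Set.mem_iUnion.2 ⟨i, fun j => ⟨hi j, ?_⟩⟩
  have hterm : ‖cross3 (X i) (X j)‖ ^ 2 ≤ ∑ a, ∑ b, ‖cross3 (X a) (X b)‖ ^ 2 :=
    (Finset.single_le_sum (f := fun b => ‖cross3 (X i) (X b)‖ ^ 2) (fun b _ => sq_nonneg _)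
      (Finset.mem_univ j)).trans
      (Finset.single_le_sum (f := fun a => ∑ b, ‖cross3 (X a) (X b)‖ ^ 2)
        (fun a _ => Finset.sum_nonneg fun b _ => sq_nonneg _) (Finset.mem_univ i))
  simp only [Set.mem_ofPred_eq, VB] at hX
  linarith

theorem confNorm_le_of_forall_norm_le {D : ℕ} {X : Fin D → E3} {i : Fin D}
    (h : ∀ j, ‖X j‖ ≤ ‖X i‖) : confNorm D X ≤ √D * ‖X i‖ := by
  rw [confNorm, ← Real.sqrt_sq (norm_nonneg (X i)), ← Real.sqrt_mul (Nat.cast_nonneg _)]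
  refine Real.sqrt_le_sqrt ?_
  calc ∑ j, ‖X j‖ ^ 2 ≤ ∑ _j : Fin D, ‖X i‖ ^ 2 :=
        Finset.sum_le_sum fun j _ => pow_le_pow_left₀ (norm_nonneg _) (h j) 2
  _ = D * ‖X i‖ ^ 2 := by simp

theorem lintegral_confNorm_lt_top_of_dominant {n : ℕ} (hn : 5 ≤ n) (i : Fin (n + 1)) :
    ∫⁻ X in {X : Fin (n + 1) → E3 | ∀ j, X j ∈ nearlyParallel (X i)},
      ENNReal.ofReal (confNorm (n + 1) X) < ⊤ := by
  set c := ENNReal.ofReal √(n + 1 : ℕ)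
  calc ∫⁻ X in {X : Fin (n + 1) → E3 | ∀ j, X j ∈ nearlyParallel (X i)},
        ENNReal.ofReal (confNorm (n + 1) X)
      ≤ ∫⁻ X in {X : Fin (n + 1) → E3 | ∀ j, X j ∈ nearlyParallel (X i)},
        c * ENNReal.ofReal ‖X i‖ :=
        setLIntegral_mono (by fun_prop) fun X hX => by
          rw [← ENNReal.ofReal_mul (by positivity)]
          exact ENNReal.ofReal_le_ofReal (confNorm_le_of_forall_norm_le fun j => (hX j).1)
  _ ≤ ∫⁻ x, c * ENNReal.ofReal ‖x‖ * volume (nearlyParallel x) ^ n :=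
        lintegral_pi_forall_mem_le volume i measurableSet_nearlyParallel_graph (by fun_prop)
  _ = c * ∫⁻ x, ENNReal.ofReal ‖x‖ * volume (nearlyParallel x) ^ n := by
        simp_rw [mul_assoc]; exact lintegral_const_mul' _ _ ENNReal.ofReal_ne_top
  _ < ⊤ := ENNReal.mul_lt_top ENNReal.ofReal_lt_top
        (lintegral_norm_mul_volume_nearlyParallel_pow_lt_top hn)

/-- For every integer `D > 5`, the integral of the Euclidean norm over the valley
`Ω = {X ∈ (ℝ³)^D : V_B(X) < 1}` is finite. -/
theorem integral_norm_valley_lt_top (D : ℕ) (hD : 5 < D) :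
    ∫⁻ X in {X : Fin D → EuclideanSpace ℝ (Fin 3) | VB D X < 1},
      ENNReal.ofReal (confNorm D X) < ⊤ := by
  obtain ⟨n, rfl⟩ : ∃ n, D = n + 1 := ⟨D - 1, by omega⟩
  calc ∫⁻ X in {X : Fin (n + 1) → E3 | VB (n + 1) X < 1}, ENNReal.ofReal (confNorm (n + 1) X)
      ≤ ∫⁻ X in ⋃ i, {X : Fin (n + 1) → E3 | ∀ j, X j ∈ nearlyParallel (X i)},
        ENNReal.ofReal (confNorm (n + 1) X) := lintegral_mono_set valley_subset_iUnion
  _ ≤ ∑' i, ∫⁻ X in {X : Fin (n + 1) → E3 | ∀ j, X j ∈ nearlyParallel (X i)},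
        ENNReal.ofReal (confNorm (n + 1) X) := lintegral_iUnion_le _ _
  _ < ⊤ := by
    rw [tsum_fintype]
    exact ENNReal.sum_lt_top.2 fun i _ => lintegral_confNorm_lt_top_of_dominant (by omega) i
end
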